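/- Let v ∈ ℝ^{n2} with ‖v‖ = 1 and v^∥ ≠ 0, let u ∈ ℝ^{n1} be nonzero, and let 0 < β < α < 1 be real numbers such that ‖u^∥‖² ≥ α·‖v^∥‖² and ‖u^⊥‖² ≤ β·‖v^⊥‖². Set û := u/‖u‖. Then ‖û^∥‖² ≥ α·‖v^∥‖² / (β + (α−β)·‖v^∥‖²) ≥ ‖v^∥‖² / (β/α + ‖v^∥‖²), and ‖û^⊥‖² ≤ (β/(α·‖v^∥‖²))·‖v^⊥‖². -/

import Mathlib

open MeasureTheory ProbabilityTheory Matrix Finset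
open scoped BigOperators ENNReal NNReal RealInnerProductSpace

noncomputable section

namespace ALSPaper

/-- View a plain vector as an element of Euclidean space. -/
def toE {n : ℕ} (x : Fin n → ℝ) : EuclideanSpace ℝ (Fin n) :=
  (WithLp.equiv 2 (Fin n → ℝ)).symm x

/-- View an element of Euclidean space as a plain vector. -/
def ofE {n : ℕ} (x : EuclideanSpace ℝ (Fin n)) : Fin n → ℝ :=
  WithLp.equiv 2 (Fin n → ℝ) x

/-- The first standard basis vector. -/
def e1 (n : ℕ) : EuclideanSpace ℝ (Fin n) :=
  toE fun i => if (i : ℕ) = 0 then 1 else 0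

/-- Frobenius inner product. -/
def frobInner {n1 n2 : ℕ} (A B : Matrix (Fin n1) (Fin n2) ℝ) : ℝ :=
  ∑ i, ∑ j, A i j * B i j

/-- Frobenius norm. -/
def frobNorm {n1 n2 : ℕ} (A : Matrix (Fin n1) (Fin n2) ℝ) : ℝ :=
  Real.sqrt (frobInner A A)

/-- The measurement operator. -/
def calA {n1 n2 m : ℕ} (A : Fin m → Matrix (Fin n1) (Fin n2) ℝ)
    (X : Matrix (Fin n1) (Fin n2) ℝ) : EuclideanSpace ℝ (Fin m) :=
  toE fun i => (Real.sqrt m)⁻¹ * frobInner (A i) X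

/-- The adjoint of the measurement operator. -/
def calAdj {n1 n2 m : ℕ} (A : Fin m → Matrix (Fin n1) (Fin n2) ℝ)
    (w : EuclideanSpace ℝ (Fin m)) : Matrix (Fin n1) (Fin n2) ℝ :=
  ∑ i, ((Real.sqrt m)⁻¹ * ofE w i) • A i

/-- The restricted isometry property (RIP) with constant `δ` (for rank ≤ 4). -/
def HasRIP {n1 n2 m : ℕ} (A : Fin m → Matrix (Fin n1) (Fin n2) ℝ) (δ : ℝ) : Prop :=
  ∀ Z : Matrix (Fin n1) (Fin n2) ℝ, Z.rank ≤ 4 →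
    (1 - δ) * frobNorm Z ^ 2 ≤ ‖calA A Z‖ ^ 2 ∧ ‖calA A Z‖ ^ 2 ≤ (1 + δ) * frobNorm Z ^ 2

/-- Component of `v` parallel to the first standard basis vector. -/
def par {n : ℕ} (v : EuclideanSpace ℝ (Fin n)) : EuclideanSpace ℝ (Fin n) :=
  ⟪e1 n, v⟫ • e1 n

/-- Component of `v` orthogonal to the first standard basis vector. -/
def perp {n : ℕ} (v : EuclideanSpace ℝ (Fin n)) : EuclideanSpace ℝ (Fin n) :=
  v - par v

/-- The "diagonal block" part of a measurement matrix. -/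
def Dmat {n1 n2 : ℕ} (A : Matrix (Fin n1) (Fin n2) ℝ) : Matrix (Fin n1) (Fin n2) ℝ :=
  vecMulVec (ofE (e1 n1)) (ofE (e1 n1)) * A * vecMulVec (ofE (e1 n2)) (ofE (e1 n2))
    + (1 - vecMulVec (ofE (e1 n1)) (ofE (e1 n1))) * A *
        (1 - vecMulVec (ofE (e1 n2)) (ofE (e1 n2)))

/-- The "off-diagonal block" part of a measurement matrix. -/
def Omat {n1 n2 : ℕ} (A : Matrix (Fin n1) (Fin n2) ℝ) : Matrix (Fin n1) (Fin n2) ℝ :=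
  vecMulVec (ofE (e1 n1)) (ofE (e1 n1)) * A * (1 - vecMulVec (ofE (e1 n2)) (ofE (e1 n2)))
    + (1 - vecMulVec (ofE (e1 n1)) (ofE (e1 n1))) * A * vecMulVec (ofE (e1 n2)) (ofE (e1 n2))

/-- The (1,1) entry of a matrix. -/
def ent11 {n1 n2 : ℕ} (A : Matrix (Fin n1) (Fin n2) ℝ) : ℝ :=
  frobInner (vecMulVec (ofE (e1 n1)) (ofE (e1 n2))) A

/-- Spectral (operator) norm of a matrix. -/
def specNorm {n1 n2 : ℕ} (M : Matrix (Fin n1) (Fin n2) ℝ) : ℝ :=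
  ‖LinearMap.toContinuousLinearMap (Matrix.toEuclideanLin M)‖

/-- The normal equation for the least-squares update. -/
def NormalEq {n1 n2 m : ℕ} (A : Fin m → Matrix (Fin n1) (Fin n2) ℝ)
    (u : EuclideanSpace ℝ (Fin n1)) (v : EuclideanSpace ℝ (Fin n2)) : Prop :=
  u = ⟪v, e1 n2⟫ • e1 n1 +
    toE (((vecMulVec (ofE u) (ofE v) - vecMulVec (ofE (e1 n1)) (ofE (e1 n2))) -
      calAdj A (calA A (vecMulVec (ofE u) (ofE v) - vecMulVec (ofE (e1 n1)) (ofE (e1 n2)))))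
        *ᵥ ofE v)

/-- sin of the angle between two vectors. -/
def sinAngle {n : ℕ} (a b : EuclideanSpace ℝ (Fin n)) : ℝ :=
  Real.sqrt (1 - ⟪a, b⟫ ^ 2 / (‖a‖ ^ 2 * ‖b‖ ^ 2))

/-- `c_t` sequence. -/
def cseq (n2 t : ℕ) : ℝ := (1 + 1 / Real.log n2) ^ t - 1

/-- ALS iterates. -/
def IsALS {n1 n2 m : ℕ} (A : Fin m → Matrix (Fin n1) (Fin n2) ℝ)
    (y : EuclideanSpace ℝ (Fin m)) (v0 : EuclideanSpace ℝ (Fin n2))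
    (u : ℕ → EuclideanSpace ℝ (Fin n1)) (v : ℕ → EuclideanSpace ℝ (Fin n2))
    (uh : ℕ → EuclideanSpace ℝ (Fin n1)) (vh : ℕ → EuclideanSpace ℝ (Fin n2)) : Prop :=
  v 0 = v0 ∧
  ∀ t : ℕ,
    (∀ u' : EuclideanSpace ℝ (Fin n1),
      ‖y - calA A (vecMulVec (ofE (uh t)) (ofE (v t)))‖ ≤
        ‖y - calA A (vecMulVec (ofE u') (ofE (v t)))‖) ∧
    u (t + 1) = ‖uh t‖⁻¹ • uh t ∧
    (∀ v' : EuclideanSpace ℝ (Fin n2),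
      ‖y - calA A (vecMulVec (ofE (u (t + 1))) (ofE (vh t)))‖ ≤
        ‖y - calA A (vecMulVec (ofE (u (t + 1))) (ofE v'))‖) ∧
    v (t + 1) = ‖vh t‖⁻¹ • vh t

/-! Writing `a = ‖v^∥‖²`, `P = ‖u^∥‖²`, `Q = ‖u^⊥‖²`, normalisation gives `‖û^∥‖² = P / (P + Q)` and
`‖û^⊥‖² = Q / (P + Q)`. The first is increasing in `P` and decreasing in `Q`, so it is smallest at
`P = α a`, `Q = β (1 - a)`; the second is at most `Q / P ≤ β (1 - a) / (α a)`. -/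

theorem norm_inv_smul_sq {E : Type*} [NormedAddCommGroup E] [NormedSpace ℝ E] (c : ℝ) (x : E) :
    ‖c⁻¹ • x‖ ^ 2 = ‖x‖ ^ 2 / c ^ 2 := by
  rw [norm_smul, mul_pow, Real.norm_eq_abs, sq_abs, inv_pow, inv_mul_eq_div]

theorem norm_inner_smul_sq_add_norm_sub_inner_smul_sq {E : Type*} [NormedAddCommGroup E]
    [InnerProductSpace ℝ E] {e : E} (he : ‖e‖ = 1) (x : E) :
    ‖⟪e, x⟫ • e‖ ^ 2 + ‖x - ⟪e, x⟫ • e‖ ^ 2 = ‖x‖ ^ 2 := by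
  rw [← Submodule.starProjection_unit_singleton ℝ he,
    ← Submodule.starProjection_orthogonal_val]
  exact ((ℝ ∙ e).norm_sq_eq_add_norm_sq_starProjection x).symm

section RatioBounds

variable {p p' q q' : ℝ}

theorem div_add_le_div_add (hp' : 0 < p') (hp : p' ≤ p) (hq : 0 ≤ q) (hq' : q ≤ q') :
    p' / (p' + q') ≤ p / (p + q) := by
  rw [div_le_div_iff₀ (by linarith) (by linarith)]
  nlinarith [mul_le_mul hp hq' hq (hp'.le.trans hp)]

theorem div_add_le_div (hp : 0 < p) (hq : 0 ≤ q) (hq' : q ≤ q') (hp' : 0 < p') (hpp' : p' ≤ p) :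
    q / (p + q) ≤ q' / p' :=
  calc q / (p + q) ≤ q / p := div_le_div_of_nonneg_left hq hp (le_add_of_nonneg_right hq)
    _ ≤ q' / p' := div_le_div₀ (hq.trans hq') hq' hp' hpp'

end RatioBounds

theorem div_le_mul_div_add {a α β : ℝ} (ha : 0 < a) (ha1 : a ≤ 1) (hα : 0 < α) (hβ : 0 ≤ β) :
    a / (β / α + a) ≤ α * a / (β + (α - β) * a) := by
  have hden : 0 < β + (α - β) * a := by nlinarith
  rw [div_le_div_iff₀ (by positivity) hden, div_add' _ _ _ hα.ne']
  field_simp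
  nlinarith [mul_nonneg hβ (mul_nonneg ha.le ha.le)]

theorem e1_eq_single {n : ℕ} (hn : 0 < n) : e1 n = EuclideanSpace.single ⟨0, hn⟩ (1 : ℝ) := by
  ext j
  simp [e1, toE, Fin.ext_iff]

theorem norm_e1 {n : ℕ} (hn : 0 < n) : ‖e1 n‖ = 1 := by
  rw [e1_eq_single hn, PiLp.norm_single, norm_one]

theorem par_smul {n : ℕ} (c : ℝ) (x : EuclideanSpace ℝ (Fin n)) : par (c • x) = c • par x := by
  simp only [par, inner_smul_right, smul_smul]

theorem perp_smul {n : ℕ} (c : ℝ) (x : EuclideanSpace ℝ (Fin n)) : perp (c • x) = c • perp x := by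
  simp only [perp, par_smul, smul_sub]

theorem norm_par_sq_add_norm_perp_sq {n : ℕ} (x : EuclideanSpace ℝ (Fin n)) :
    ‖par x‖ ^ 2 + ‖perp x‖ ^ 2 = ‖x‖ ^ 2 := by
  rcases Nat.eq_zero_or_pos n with rfl | hn
  · simp [Subsingleton.elim x 0, perp, par]
  · exact norm_inner_smul_sq_add_norm_sub_inner_smul_sq (norm_e1 hn) x

theorem statement15_general {n1 n2 : ℕ}
    (v : EuclideanSpace ℝ (Fin n2)) (hv : ‖v‖ = 1) (hvpar : par v ≠ 0)
    (u : EuclideanSpace ℝ (Fin n1))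
    (α β : ℝ) (hβ0 : 0 < β) (hβα : β < α)
    (hpar : ‖par u‖ ^ 2 ≥ α * ‖par v‖ ^ 2)
    (hperp : ‖perp u‖ ^ 2 ≤ β * ‖perp v‖ ^ 2) :
    (‖par (‖u‖⁻¹ • u)‖ ^ 2 ≥ α * ‖par v‖ ^ 2 / (β + (α - β) * ‖par v‖ ^ 2) ∧
      α * ‖par v‖ ^ 2 / (β + (α - β) * ‖par v‖ ^ 2) ≥ ‖par v‖ ^ 2 / (β / α + ‖par v‖ ^ 2)) ∧
    ‖perp (‖u‖⁻¹ • u)‖ ^ 2 ≤ β / (α * ‖par v‖ ^ 2) * ‖perp v‖ ^ 2 := by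
  have hα : 0 < α := hβ0.trans hβα
  have ha : 0 < ‖par v‖ ^ 2 := by positivity
  have hv_split : ‖par v‖ ^ 2 + ‖perp v‖ ^ 2 = 1 := by rw [norm_par_sq_add_norm_perp_sq, hv, one_pow]
  have hu_split := norm_par_sq_add_norm_perp_sq u
  have hαa : 0 < α * ‖par v‖ ^ 2 := by positivity
  have hPu : 0 < ‖par u‖ ^ 2 := hαa.trans_le hpar
  rw [par_smul, perp_smul, norm_inv_smul_sq, norm_inv_smul_sq, ← hu_split]
  refine ⟨⟨?_, div_le_mul_div_add ha (by linarith [sq_nonneg ‖perp v‖]) hα hβ0.le⟩, ?_⟩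
  · have hden : β + (α - β) * ‖par v‖ ^ 2 = α * ‖par v‖ ^ 2 + β * ‖perp v‖ ^ 2 := by
      linear_combination (-β) * hv_split
    rw [hden]
    exact div_add_le_div_add hαa hpar (sq_nonneg _) hperp
  · rw [div_mul_eq_mul_div]
    exact div_add_le_div hPu (sq_nonneg _) hperp hαa hpar

/-- Lemma `convergence`: error propagation through the normalization step. -/
theorem statement15 {n1 n2 : ℕ}
    (v : EuclideanSpace ℝ (Fin n2)) (hv : ‖v‖ = 1) (hvpar : par v ≠ 0)
    (u : EuclideanSpace ℝ (Fin n1)) (hu : u ≠ 0)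
    (α β : ℝ) (hβ0 : 0 < β) (hβα : β < α) (hα1 : α < 1)
    (hpar : ‖par u‖ ^ 2 ≥ α * ‖par v‖ ^ 2)
    (hperp : ‖perp u‖ ^ 2 ≤ β * ‖perp v‖ ^ 2) :
    (‖par (‖u‖⁻¹ • u)‖ ^ 2 ≥ α * ‖par v‖ ^ 2 / (β + (α - β) * ‖par v‖ ^ 2) ∧
      α * ‖par v‖ ^ 2 / (β + (α - β) * ‖par v‖ ^ 2) ≥ ‖par v‖ ^ 2 / (β / α + ‖par v‖ ^ 2)) ∧
    ‖perp (‖u‖⁻¹ • u)‖ ^ 2 ≤ β / (α * ‖par v‖ ^ 2) * ‖perp v‖ ^ 2 :=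
  statement15_general v hv hvpar u α β hβ0 hβα hpar hperp

end ALSPaper
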